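/- arXiv:2008.01915 — 2 statements merged into one kernel-verified Lean document; each statement's English description precedes it below -/
import Mathlib

section
/- Fix p ≥ 1 and a constant C. Let P_n^{YZ} (n ∈ ℕ) and P^{YZ} be probability measures on D_y × D_z, where D_y ⊂ ℝ^{d_y} and D_z ⊂ ℝ^{d_z} are compact, with marginals P_n^Y, P^Y on D_y and disintegration kernels P_n^{Z|Y=y}, P^{Z|Y=y}. Suppose P_n^{YZ} converges weakly to P^{YZ} and the map y ↦ P^{Z|Y=y} is C-Lipschitz in the Wasserstein-p metric. Then for every bounded Lipschitz function g : ℝ^{d_y} × ℝ^{d_z} → ℝ, the difference ∬ g(y,z) dP_n^{Z|Y=y}(z) dP_n^Y(y) − ∬ g(y,z) dP^{Z|Y=y}(z) dP_n^Y(y) converges to 0 as n → ∞. -/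
open MeasureTheory Filter Topology ENNReal

/-- `π` is a coupling of `μ` and `ν`: a measure on the product whose marginals are `μ`, `ν`. -/
def IsCoupling {α β : Type*} [MeasurableSpace α] [MeasurableSpace β]
    (π : Measure (α × β)) (μ : Measure α) (ν : Measure β) : Prop :=
  π.map Prod.fst = μ ∧ π.map Prod.snd = ν

/-- The Wasserstein-`p` distance between two measures on a measurable space equipped with a
distance function `d`: the infimum over all couplings `π` of `(∫ d(x,y)^p dπ)^{1/p}`. -/
noncomputable def wassersteinDist {α : Type*} [MeasurableSpace α]
    (d : α → α → ℝ) (p : ℝ) (μ ν : Measure α) : ℝ≥0∞ :=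
  ⨅ (π : Measure (α × α)) (_ : IsProbabilityMeasure π) (_ : IsCoupling π μ ν),
    (∫⁻ z, ENNReal.ofReal (d z.1 z.2 ^ p) ∂π) ^ (1 / p)

/-- Weak convergence of a sequence of measures: integrals of every bounded continuous
real-valued function converge. -/
def WeakTendsto {α : Type*} [MeasurableSpace α] [TopologicalSpace α]
    (μs : ℕ → Measure α) (μ : Measure α) : Prop :=
  ∀ f : BoundedContinuousFunction α ℝ,
    Tendsto (fun n => ∫ x, f x ∂(μs n)) atTop (𝓝 (∫ x, f x ∂μ))

/-- `κ` is a disintegration kernel of the measure `P` on `α × β` along the first coordinate: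
a measurable family of probability measures on `β` with
`P(A × B) = ∫_A κ(y)(B) d(P.map fst)(y)`. -/
def IsDisintegrationFst {α β : Type*} [MeasurableSpace α] [MeasurableSpace β]
    (P : Measure (α × β)) (κ : α → Measure β) : Prop :=
  (∀ y, IsProbabilityMeasure (κ y)) ∧
  (∀ B : Set β, MeasurableSet B → Measurable fun y => κ y B) ∧
  ∀ A B, MeasurableSet A → MeasurableSet B →
    P (A ×ˢ B) = ∫⁻ y in A, κ y B ∂(P.map Prod.fst)

/-!
Put `F y = ∫ g y z ∂P^{Z|Y=y}`. Disintegrating `Pₙ^{YZ}` turns the first term into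
`∫ g dPₙ^{YZ}`, and the second is `∫ F ∘ fst dPₙ^{YZ}`. The function `F` is bounded and
Lipschitz: moving `y` in the integrand costs `L ‖y - y'‖`, and moving the measure costs at most
`L · W₁ ≤ L · W_p ≤ L C ‖y - y'‖`, because the integrals of an `L`-Lipschitz function against the
two marginals of a coupling `π` differ by at most `L ∫ d dπ`. So both terms integrate bounded
continuous functions against `Pₙ^{YZ}`; by weak convergence their difference tends to
`∫ g dP^{YZ} - ∫ F ∘ fst dP^{YZ}`, which vanishes by disintegrating `P^{YZ}`.
-/

open ProbabilityTheory
open scoped NNReal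

namespace IsDisintegrationFst

variable {α β : Type*} [MeasurableSpace α] [MeasurableSpace β] {P : Measure (α × β)}
  {κ : α → Measure β}

noncomputable def toKernel (h : IsDisintegrationFst P κ) : Kernel α β :=
  ⟨κ, Measure.measurable_of_measurable_coe κ h.2.1⟩

theorem isMarkovKernel_toKernel (h : IsDisintegrationFst P κ) : IsMarkovKernel h.toKernel :=
  ⟨h.1⟩

theorem eq_compProd [IsFiniteMeasure P] (h : IsDisintegrationFst P κ) :
    P = P.map Prod.fst ⊗ₘ h.toKernel := by
  have := h.isMarkovKernel_toKernel
  refine ext_of_generate_finite _ generateFrom_prod.symm isPiSystem_prod ?_ ?_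
  · rintro _ ⟨A, hA, B, hB, rfl⟩
    rw [Measure.compProd_apply_prod hA hB, h.2.2 A B hA hB]
    rfl
  · rw [Measure.compProd_apply_univ, Measure.map_apply measurable_fst .univ, Set.preimage_univ]

theorem integral_eq_integral_integral [IsFiniteMeasure P] (h : IsDisintegrationFst P κ)
    {f : α × β → ℝ} (hf : Integrable f P) :
    ∫ x, f x ∂P = ∫ y, ∫ z, f (y, z) ∂κ y ∂P.map Prod.fst := by
  have := h.isMarkovKernel_toKernel
  rw [h.eq_compProd] at hf
  conv_lhs => rw [h.eq_compProd]
  exact Measure.integral_compProd hf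

end IsDisintegrationFst

theorem lipschitzWith_left_right_of_dist_le {α β γ : Type*} [PseudoMetricSpace α]
    [PseudoMetricSpace β] [PseudoMetricSpace γ] {f : α → β → γ} {K : ℝ≥0}
    (hf : ∀ a b a' b', dist (f a b) (f a' b') ≤ K * (dist a a' + dist b b')) :
    (∀ b, LipschitzWith K fun a => f a b) ∧ ∀ a, LipschitzWith K (f a) :=
  ⟨fun b => .of_dist_le_mul fun a a' => by simpa using hf a b a' b,
    fun a => .of_dist_le_mul fun b b' => by simpa using hf a b a b'⟩

section Wasserstein

variable {E : Type*} [PseudoMetricSpace E] [MeasurableSpace E] [OpensMeasurableSpace E]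

theorem lintegral_edist_le_rpow [SecondCountableTopology E] {π : Measure (E × E)}
    [IsProbabilityMeasure π] {p : ℝ} (hp : 1 ≤ p) :
    ∫⁻ z, edist z.1 z.2 ∂π ≤ (∫⁻ z, ENNReal.ofReal (dist z.1 z.2 ^ p) ∂π) ^ (1 / p) := by
  have hp0 : ENNReal.ofReal p ≠ 0 := (ENNReal.ofReal_pos.2 (by linarith)).ne'
  calc ∫⁻ z, edist z.1 z.2 ∂π = eLpNorm (fun z : E × E => dist z.1 z.2) 1 π := by
        simp only [eLpNorm_one_eq_lintegral_enorm, Real.enorm_eq_ofReal dist_nonneg, edist_dist]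
    _ ≤ eLpNorm (fun z : E × E => dist z.1 z.2) (ENNReal.ofReal p) π :=
        eLpNorm_le_eLpNorm_of_exponent_le (by simpa using hp) continuous_dist.aestronglyMeasurable
    _ = _ := by
        rw [eLpNorm_eq_lintegral_rpow_enorm_toReal hp0 ENNReal.ofReal_ne_top,
          ENNReal.toReal_ofReal (by linarith)]
        simp only [Real.enorm_eq_ofReal dist_nonneg,
          ENNReal.ofReal_rpow_of_nonneg dist_nonneg (by linarith : 0 ≤ p)]

theorem IsCoupling.edist_integral_le {π : Measure (E × E)} {μ ν : Measure E}
    (hπ : IsCoupling π μ ν) {φ : E → ℝ} {K : ℝ≥0} (hφ : LipschitzWith K φ)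
    (hμ : Integrable φ μ) (hν : Integrable φ ν) :
    edist (∫ x, φ x ∂μ) (∫ x, φ x ∂ν) ≤ K * ∫⁻ z, edist z.1 z.2 ∂π := by
  have hμπ : Integrable (fun z : E × E => φ z.1) π :=
    (hπ.1 ▸ hμ).comp_measurable measurable_fst
  have hνπ : Integrable (fun z : E × E => φ z.2) π :=
    (hπ.2 ▸ hν).comp_measurable measurable_snd
  rw [← hπ.1, ← hπ.2, integral_map measurable_fst.aemeasurable hφ.continuous.aestronglyMeasurable,
    integral_map measurable_snd.aemeasurable hφ.continuous.aestronglyMeasurable,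
    edist_eq_enorm_sub, ← integral_sub hμπ hνπ, ← lintegral_const_mul' _ _ ENNReal.coe_ne_top]
  calc _ ≤ ∫⁻ z, ‖φ z.1 - φ z.2‖ₑ ∂π := enorm_integral_le_lintegral_enorm _
    _ ≤ _ := lintegral_mono fun z => by rw [← edist_eq_enorm_sub]; exact hφ z.1 z.2

theorem edist_integral_le_mul_wassersteinDist [SecondCountableTopology E] {μ ν : Measure E}
    {p : ℝ} (hp : 1 ≤ p) (hW : wassersteinDist (fun a b => dist a b) p μ ν ≠ ⊤)
    {φ : E → ℝ} {K : ℝ≥0} (hφ : LipschitzWith K φ) (hμ : Integrable φ μ) (hν : Integrable φ ν) :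
    edist (∫ x, φ x ∂μ) (∫ x, φ x ∂ν) ≤ K * wassersteinDist (fun a b => dist a b) p μ ν := by
  have := nhdsGT_neBot_of_exists_gt ⟨⊤, hW.lt_top⟩
  have hlim : Tendsto (fun r => (K : ℝ≥0∞) * r)
      (𝓝[>] (wassersteinDist (fun a b => dist a b) p μ ν))
      (𝓝 (K * wassersteinDist (fun a b => dist a b) p μ ν)) :=
    ENNReal.Tendsto.const_mul (tendsto_nhdsWithin_of_tendsto_nhds tendsto_id)
      (Or.inr ENNReal.coe_ne_top)
  refine ge_of_tendsto hlim (eventually_nhdsWithin_of_forall fun r hr => ?_)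
  obtain ⟨π, hπ, hcoupling, hcost⟩ : ∃ π : Measure (E × E), IsProbabilityMeasure π ∧
      IsCoupling π μ ν ∧ (∫⁻ z, ENNReal.ofReal (dist z.1 z.2 ^ p) ∂π) ^ (1 / p) < r := by
    simpa only [Set.mem_Ioi, wassersteinDist, iInf_lt_iff, exists_prop] using hr
  calc _ ≤ K * ∫⁻ z, edist z.1 z.2 ∂π := hcoupling.edist_integral_le hφ hμ hν
    _ ≤ K * r := by gcongr; exact (lintegral_edist_le_rpow hp).trans hcost.le

end Wasserstein

theorem lipschitzWith_integral_of_wassersteinDist_le {α E : Type*} [PseudoMetricSpace α]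
    [PseudoMetricSpace E] [MeasurableSpace E] [OpensMeasurableSpace E] [SecondCountableTopology E]
    {κ : α → Measure E} [∀ y, IsProbabilityMeasure (κ y)] {p : ℝ} (hp : 1 ≤ p) {C : ℝ≥0}
    (hκ : ∀ y y', wassersteinDist (fun a b => dist a b) p (κ y) (κ y') ≤ C * edist y y')
    {g : α → E → ℝ} {K : ℝ≥0} (hgy : ∀ y, LipschitzWith K (g y))
    (hgz : ∀ z, LipschitzWith K fun y => g y z) (hint : ∀ y y', Integrable (g y) (κ y')) :
    LipschitzWith (K * C + K) fun y => ∫ z, g y z ∂κ y := by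
  intro y y'
  have hW : wassersteinDist (fun a b => dist a b) p (κ y) (κ y') ≠ ⊤ :=
    ne_top_of_le_ne_top (ENNReal.mul_ne_top ENNReal.coe_ne_top (edist_ne_top y y')) (hκ y y')
  have hmeasure : edist (∫ z, g y z ∂κ y) (∫ z, g y z ∂κ y') ≤ K * (C * edist y y') :=
    (edist_integral_le_mul_wassersteinDist hp hW (hgy y) (hint y y) (hint y y')).trans
      (by gcongr; exact hκ y y')
  have hintegrand : edist (∫ z, g y z ∂κ y') (∫ z, g y' z ∂κ y') ≤ K * edist y y' := by
    rw [edist_eq_enorm_sub, ← integral_sub (hint y y') (hint y' y')]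
    calc _ ≤ ∫⁻ z, ‖g y z - g y' z‖ₑ ∂κ y' := enorm_integral_le_lintegral_enorm _
      _ ≤ ∫⁻ _, K * edist y y' ∂κ y' :=
          lintegral_mono fun z => by rw [← edist_eq_enorm_sub]; exact hgz z y y'
      _ = K * edist y y' := by simp
  calc _ ≤ edist (∫ z, g y z ∂κ y) (∫ z, g y z ∂κ y')
        + edist (∫ z, g y z ∂κ y') (∫ z, g y' z ∂κ y') := edist_triangle _ _ _
    _ ≤ K * (C * edist y y') + K * edist y y' := add_le_add hmeasure hintegrand
    _ = ↑(K * C + K) * edist y y' := by push_cast; ring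

theorem WeakTendsto.tendsto_integral_integral_sub {α β : Type*} [TopologicalSpace α]
    [MeasurableSpace α] [OpensMeasurableSpace α] [TopologicalSpace β] [MeasurableSpace β]
    [OpensMeasurableSpace (α × β)] {Pn : ℕ → Measure (α × β)} {P : Measure (α × β)}
    [∀ n, IsFiniteMeasure (Pn n)] [IsFiniteMeasure P] (hweak : WeakTendsto Pn P)
    {κn : ℕ → α → Measure β} {κ : α → Measure β} (hκn : ∀ n, IsDisintegrationFst (Pn n) (κn n))
    (hκ : IsDisintegrationFst P κ) (G : BoundedContinuousFunction (α × β) ℝ)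
    (F : BoundedContinuousFunction α ℝ) (hF : ∀ y, F y = ∫ z, G (y, z) ∂κ y) :
    Tendsto (fun n => (∫ y, ∫ z, G (y, z) ∂κn n y ∂(Pn n).map Prod.fst)
      - ∫ y, F y ∂(Pn n).map Prod.fst) atTop (𝓝 0) := by
  have hFfst : ∀ Q : Measure (α × β),
      ∫ x, F.compContinuous .fst x ∂Q = ∫ y, F y ∂Q.map Prod.fst :=
    fun Q => (integral_map measurable_fst.aemeasurable F.continuous.aestronglyMeasurable).symm
  have hlim := (hweak G).sub (hweak (F.compContinuous .fst))
  rw [hFfst, hκ.integral_eq_integral_integral (G.integrable _), funext_iff.2 hF, sub_self]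
    at hlim
  refine hlim.congr fun n => ?_
  rw [hFfst, (hκn n).integral_eq_integral_integral (G.integrable _)]

theorem stmt_3_general (dy dz : ℕ) (p C : ℝ) (hp : 1 ≤ p)
    (Pn : ℕ → Measure (EuclideanSpace ℝ (Fin dy) × EuclideanSpace ℝ (Fin dz)))
    (P : Measure (EuclideanSpace ℝ (Fin dy) × EuclideanSpace ℝ (Fin dz)))
    (hPn : ∀ n, IsProbabilityMeasure (Pn n)) (hP : IsProbabilityMeasure P)
    (κn : ℕ → EuclideanSpace ℝ (Fin dy) → Measure (EuclideanSpace ℝ (Fin dz)))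
    (κ : EuclideanSpace ℝ (Fin dy) → Measure (EuclideanSpace ℝ (Fin dz)))
    (hκn : ∀ n, IsDisintegrationFst (Pn n) (κn n))
    (hκ : IsDisintegrationFst P κ)
    (hweak : WeakTendsto Pn P)
    (hκlip : ∀ y y', wassersteinDist (fun a b => dist a b) p (κ y) (κ y')
      ≤ ENNReal.ofReal (C * ‖y - y'‖))
    (g : EuclideanSpace ℝ (Fin dy) → EuclideanSpace ℝ (Fin dz) → ℝ)
    (hgbdd : ∃ M, ∀ y z, |g y z| ≤ M)
    (hglip : ∃ L, ∀ y z y' z', |g y z - g y' z'| ≤ L * (‖y - y'‖ + ‖z - z'‖)) :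
    Tendsto (fun n =>
        (∫ y, ∫ z, g y z ∂(κn n y) ∂((Pn n).map Prod.fst))
          - ∫ y, ∫ z, g y z ∂(κ y) ∂((Pn n).map Prod.fst))
      atTop (𝓝 0) := by
  obtain ⟨M, hM⟩ := hgbdd
  obtain ⟨L, hL⟩ := hglip
  obtain ⟨hgz, hgy⟩ := lipschitzWith_left_right_of_dist_le (f := g) (K := L.toNNReal)
    fun y z y' z' => by
      rw [Real.dist_eq, dist_eq_norm y, dist_eq_norm z]
      exact (hL y z y' z').trans (by gcongr; exact Real.le_coe_toNNReal L)
  have := hκ.1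
  have hκlip' : ∀ y y', wassersteinDist (fun a b => dist a b) p (κ y) (κ y')
      ≤ C.toNNReal * edist y y' := fun y y' =>
    calc _ ≤ ENNReal.ofReal (C * ‖y - y'‖) := hκlip y y'
      _ ≤ ENNReal.ofReal (C.toNNReal * dist y y') := by
          rw [dist_eq_norm]; gcongr; exact Real.le_coe_toNNReal C
      _ = C.toNNReal * edist y y' := by
          rw [ENNReal.ofReal_mul (by positivity), ENNReal.ofReal_coe_nnreal, edist_dist]
  have hF := lipschitzWith_integral_of_wassersteinDist_le hp hκlip' hgy hgz fun y _ =>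
    .of_bound (hgy y).continuous.aestronglyMeasurable M (ae_of_all _ (hM y))
  let G := BoundedContinuousFunction.ofNormedAddCommGroup (Function.uncurry g)
    (LipschitzWith.uncurry hgz hgy).continuous M fun x => hM x.1 x.2
  let F := BoundedContinuousFunction.ofNormedAddCommGroup _ hF.continuous M fun y => by
    simpa using norm_integral_le_of_norm_le_const (f := g y) (ae_of_all (κ y) (hM y))
  exact hweak.tendsto_integral_integral_sub hκn hκ G F fun _ => rfl

/-- **Lemma 3.** Fix `p ≥ 1` and a constant `C`. Let `Pₙ^{YZ}` and `P^{YZ}` be probability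
measures on `D_y × D_z` (compact subsets of Euclidean spaces), with marginals `Pₙ^Y`, `P^Y` and
disintegration kernels `Pₙ^{Z|Y=y}`, `P^{Z|Y=y}`. If `Pₙ^{YZ}` converges weakly to `P^{YZ}` and
`y ↦ P^{Z|Y=y}` is `C`-Lipschitz in the Wasserstein-`p` metric, then for every bounded
Lipschitz `g`, the difference
`∬ g dPₙ^{Z|Y=y} dPₙ^Y − ∬ g dP^{Z|Y=y} dPₙ^Y` converges to `0`. -/
theorem stmt_3 (dy dz : ℕ) (p C : ℝ) (hp : 1 ≤ p)
    (Dy : Set (EuclideanSpace ℝ (Fin dy))) (Dz : Set (EuclideanSpace ℝ (Fin dz)))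
    (hDy : IsCompact Dy) (hDz : IsCompact Dz)
    (Pn : ℕ → Measure (EuclideanSpace ℝ (Fin dy) × EuclideanSpace ℝ (Fin dz)))
    (P : Measure (EuclideanSpace ℝ (Fin dy) × EuclideanSpace ℝ (Fin dz)))
    (hPn : ∀ n, IsProbabilityMeasure (Pn n)) (hP : IsProbabilityMeasure P)
    (hPnsupp : ∀ n, Pn n (Dy ×ˢ Dz) = 1) (hPsupp : P (Dy ×ˢ Dz) = 1)
    (κn : ℕ → EuclideanSpace ℝ (Fin dy) → Measure (EuclideanSpace ℝ (Fin dz)))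
    (κ : EuclideanSpace ℝ (Fin dy) → Measure (EuclideanSpace ℝ (Fin dz)))
    (hκn : ∀ n, IsDisintegrationFst (Pn n) (κn n))
    (hκ : IsDisintegrationFst P κ)
    (hweak : WeakTendsto Pn P)
    (hκlip : ∀ y y', wassersteinDist (fun a b => dist a b) p (κ y) (κ y')
      ≤ ENNReal.ofReal (C * ‖y - y'‖))
    (g : EuclideanSpace ℝ (Fin dy) → EuclideanSpace ℝ (Fin dz) → ℝ)
    (hgbdd : ∃ M, ∀ y z, |g y z| ≤ M)
    (hglip : ∃ L, ∀ y z y' z', |g y z - g y' z'| ≤ L * (‖y - y'‖ + ‖z - z'‖)) :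
    Tendsto (fun n =>
        (∫ y, ∫ z, g y z ∂(κn n y) ∂((Pn n).map Prod.fst))
          - ∫ y, ∫ z, g y z ∂(κ y) ∂((Pn n).map Prod.fst))
      atTop (𝓝 0) :=
  stmt_3_general dy dz p C hp Pn P hPn hP κn κ hκn hκ hweak hκlip g hgbdd hglip
end

section
/- For every p ≥ 1 there exist probability measures P_n (n ∈ ℕ) and P on the compact set [0,1]³ ⊂ ℝ³, each of which is the law of a Markov chain of length 3 (the first and third coordinates are conditionally independent given the second), such that the (1,2)-marginals of P_n converge to the (1,2)-marginal of P in the Wasserstein-p metric and the (2,3)-marginals of P_n converge to the (2,3)-marginal of P in the Wasserstein-p metric, yet P_n does not converge to P in the Wasserstein-p metric. (One can take P_n = (1/2)δ_{(0,0,0)} + (1/2)δ_{(1,1/n,1)} and P = (1/4)(δ_{(0,0,0)} + δ_{(0,0,1)} + δ_{(1,0,0)} + δ_{(1,0,1)}).) -/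
open MeasureTheory Filter Topology ENNReal

/-- The `l_q` distance on `ℝ²`. -/
noncomputable def lqDist2 (q : ℝ) (a b : ℝ × ℝ) : ℝ :=
  (|a.1 - b.1| ^ q + |a.2 - b.2| ^ q) ^ (1 / q)

/-- The `l_q` distance on `ℝ³`. -/
noncomputable def lqDist3 (q : ℝ) (a b : ℝ × ℝ × ℝ) : ℝ :=
  (|a.1 - b.1| ^ q + |a.2.1 - b.2.1| ^ q + |a.2.2 - b.2.2| ^ q) ^ (1 / q)

/-- Under `μ`, the σ-algebras `mA` and `mB` are conditionally independent given the
σ-algebra `m`: for all `A ∈ mA` and `B ∈ mB`, the conditional expectation of `1_{A∩B}`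
given `m` agrees `μ`-a.e. with the product of those of `1_A` and `1_B`. -/
def CondIndepSetsGiven {Ω : Type*} [MeasurableSpace Ω] (μ : Measure Ω)
    (m mA mB : MeasurableSpace Ω) : Prop :=
  ∀ A B : Set Ω, MeasurableSet[mA] A → MeasurableSet[mB] B →
    (MeasureTheory.condExp m μ ((A ∩ B).indicator fun _ => (1 : ℝ))) =ᵐ[μ]
      fun ω => (MeasureTheory.condExp m μ (A.indicator fun _ => (1 : ℝ)) ω)
        * (MeasureTheory.condExp m μ (B.indicator fun _ => (1 : ℝ)) ω)

/-- A probability measure on `ℝ³` is the law of a Markov chain of length 3: the first and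
third coordinates are conditionally independent given the second. -/
def IsMarkovLaw3 (μ : Measure (ℝ × ℝ × ℝ)) : Prop :=
  CondIndepSetsGiven μ
    (MeasurableSpace.comap (fun w => w.2.1) inferInstance)
    (MeasurableSpace.comap (fun w => w.1) inferInstance)
    (MeasurableSpace.comap (fun w => w.2.2) inferInstance)

/-!
Let `a`, `b` be independent fair `{0,1}`-valued coins. `Pₙ` is the law of `(a, a/(n+1), a)` and
`P` that of `(a, 0, b)`. Under `Pₙ` the middle coordinate determines the first, and under `P` it
is constant while the outer coordinates are independent, so both are Markov. The
`(1,2)`-marginals of `Pₙ` and `P` are images of the coins under maps that differ by at most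
`1/(n+1)`, and so are the `(2,3)`-marginals once `b` is replaced by `a` (the coins are
exchangeable); coupling through the coins gives `W_p ≤ 1/(n+1)`. But `Pₙ` puts mass `1/2` on
`{x ≥ 1, z ≥ 1}` while `P` puts only `1/4` on `{x > 0, z > 0}`, so every coupling moves mass
`1/4` over distance at least `1`.
-/

open ProbabilityTheory

section Wasserstein

variable {α β : Type*} [MeasurableSpace α] [MeasurableSpace β]

theorem wassersteinDist_map_le (d : β → β → ℝ) {p : ℝ} (hp : 0 ≤ p) (μ : Measure α)
    [IsProbabilityMeasure μ] {f g : α → β} (hf : Measurable f) (hg : Measurable g) :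
    wassersteinDist d p (μ.map f) (μ.map g) ≤
      (∫⁻ x, ENNReal.ofReal (d (f x) (g x) ^ p) ∂μ) ^ (1 / p) := by
  have hfg : Measurable fun x => (f x, g x) := hf.prodMk hg
  have hπ : IsProbabilityMeasure (μ.map fun x => (f x, g x)) :=
    Measure.isProbabilityMeasure_map hfg.aemeasurable
  have hcoupling : IsCoupling (μ.map fun x => (f x, g x)) (μ.map f) (μ.map g) :=
    ⟨Measure.map_map measurable_fst hfg, Measure.map_map measurable_snd hfg⟩
  exact iInf_le_of_le _ <| iInf_le_of_le hπ <| iInf_le_of_le hcoupling <|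
    ENNReal.rpow_le_rpow (lintegral_map_le _ _) (by positivity)

theorem wassersteinDist_map_le_ofReal {d : β → β → ℝ} {p r : ℝ} (hp : 0 < p) (hr : 0 ≤ r)
    (μ : Measure α) [IsProbabilityMeasure μ] {f g : α → β} (hf : Measurable f)
    (hg : Measurable g) (hfg : ∀ x, d (f x) (g x) ∈ Set.Icc 0 r) :
    wassersteinDist d p (μ.map f) (μ.map g) ≤ ENNReal.ofReal r := by
  have hcost : ∫⁻ x, ENNReal.ofReal (d (f x) (g x) ^ p) ∂μ ≤ ENNReal.ofReal (r ^ p) := by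
    calc ∫⁻ x, ENNReal.ofReal (d (f x) (g x) ^ p) ∂μ ≤ ∫⁻ _, ENNReal.ofReal (r ^ p) ∂μ :=
          lintegral_mono fun x =>
            ENNReal.ofReal_le_ofReal (Real.rpow_le_rpow (hfg x).1 (hfg x).2 hp.le)
      _ = ENNReal.ofReal (r ^ p) := by simp
  calc wassersteinDist d p (μ.map f) (μ.map g)
      ≤ (∫⁻ x, ENNReal.ofReal (d (f x) (g x) ^ p) ∂μ) ^ (1 / p) :=
        wassersteinDist_map_le d hp.le μ hf hg
    _ ≤ ENNReal.ofReal (r ^ p) ^ (1 / p) := ENNReal.rpow_le_rpow hcost (by positivity)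
    _ = ENNReal.ofReal r := by
        rw [ENNReal.ofReal_rpow_of_nonneg (by positivity) (by positivity), one_div,
          Real.rpow_rpow_inv hr hp.ne']

theorem rpow_measure_sub_le_wassersteinDist {d : α → α → ℝ} {p : ℝ} (hp : 0 ≤ p)
    {μ ν : Measure α} {A B : Set α} (hA : MeasurableSet A) (hB : MeasurableSet B)
    (hd : ∀ x ∈ A, ∀ y ∉ B, 1 ≤ d x y) :
    (μ A - ν B) ^ (1 / p) ≤ wassersteinDist d p μ ν := by
  refine le_iInf fun π => le_iInf fun _ => le_iInf fun ⟨hπμ, hπν⟩ => ?_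
  have hmass : μ A - ν B ≤ π (A ×ˢ Bᶜ) := by
    rw [tsub_le_iff_right, ← hπμ, ← hπν, Measure.map_apply measurable_fst hA,
      Measure.map_apply measurable_snd hB]
    calc π (Prod.fst ⁻¹' A) ≤ π (A ×ˢ Bᶜ ∪ Prod.snd ⁻¹' B) :=
          measure_mono fun z hz => (em (z.2 ∈ B)).elim Or.inr fun h => Or.inl ⟨hz, h⟩
      _ ≤ π (A ×ˢ Bᶜ) + π (Prod.snd ⁻¹' B) := measure_union_le _ _
  have hcost : π (A ×ˢ Bᶜ) ≤ ∫⁻ z, ENNReal.ofReal (d z.1 z.2 ^ p) ∂π := by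
    rw [← lintegral_indicator_one (hA.prod hB.compl)]
    exact lintegral_mono <| Set.indicator_le fun z hz =>
      ENNReal.one_le_ofReal.2 (Real.one_le_rpow (hd _ hz.1 _ hz.2) hp)
  exact ENNReal.rpow_le_rpow (hmass.trans hcost) (by positivity)

end Wasserstein

section LqDistance

variable {q : ℝ}

theorem lqDist2_same_fst (hq : q ≠ 0) (x s t : ℝ) : lqDist2 q (x, s) (x, t) = |s - t| := by
  rw [lqDist2, sub_self, abs_zero, Real.zero_rpow hq, zero_add, one_div,
    Real.rpow_rpow_inv (abs_nonneg _) hq]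

theorem lqDist2_same_snd (hq : q ≠ 0) (s t y : ℝ) : lqDist2 q (s, y) (t, y) = |s - t| := by
  rw [lqDist2, sub_self, abs_zero, Real.zero_rpow hq, add_zero, one_div,
    Real.rpow_rpow_inv (abs_nonneg _) hq]

theorem le_rpow_add_rpow_one_div {x y : ℝ} (hq : 0 < q) (hx : 0 ≤ x) (hy : 0 ≤ y) :
    x ≤ (x ^ q + y) ^ (1 / q) :=
  calc x = (x ^ q) ^ (1 / q) := by rw [one_div, Real.rpow_rpow_inv hx hq.ne']
    _ ≤ (x ^ q + y) ^ (1 / q) :=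
        Real.rpow_le_rpow (by positivity) (le_add_of_nonneg_right hy) (by positivity)

theorem abs_fst_sub_le_lqDist3 (hq : 0 < q) (a b : ℝ × ℝ × ℝ) :
    |a.1 - b.1| ≤ lqDist3 q a b := by
  rw [lqDist3, add_assoc]
  exact le_rpow_add_rpow_one_div hq (abs_nonneg _) (by positivity)

theorem abs_snd_snd_sub_le_lqDist3 (hq : 0 < q) (a b : ℝ × ℝ × ℝ) :
    |a.2.2 - b.2.2| ≤ lqDist3 q a b := by
  rw [lqDist3, add_comm]
  exact le_rpow_add_rpow_one_div hq (abs_nonneg _) (by positivity)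

end LqDistance

section ConditionalIndependence

variable {Ω : Type*} {m mA mB m0 : MeasurableSpace Ω} {μ : Measure Ω}

theorem condIndepSetsGiven_of_aestronglyMeasurable [IsFiniteMeasure μ] (hm : m ≤ m0)
    (hmA : mA ≤ m0) (hmB : mB ≤ m0)
    (hA : ∀ A, MeasurableSet[mA] A →
      AEStronglyMeasurable[m] (A.indicator fun _ => (1 : ℝ)) μ) :
    CondIndepSetsGiven μ m mA mB := by
  intro A B hA' hB'
  have hintA : Integrable (A.indicator fun _ => (1 : ℝ)) μ :=
    (integrable_const 1).indicator (hmA _ hA')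
  have hintB : Integrable (B.indicator fun _ => (1 : ℝ)) μ :=
    (integrable_const 1).indicator (hmB _ hB')
  have hAB : ((A ∩ B).indicator fun _ => (1 : ℝ)) =
      (A.indicator fun _ => (1 : ℝ)) * B.indicator fun _ => (1 : ℝ) :=
    Set.inter_indicator_one
  have hintAB : Integrable ((A ∩ B).indicator fun _ => (1 : ℝ)) μ :=
    (integrable_const 1).indicator ((hmA _ hA').inter (hmB _ hB'))
  rw [hAB] at hintAB ⊢
  filter_upwards [condExp_mul_of_aestronglyMeasurable_left (hA A hA') hintAB hintB,
    condExp_of_aestronglyMeasurable' hm (hA A hA') hintA] with ω hpull hself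
  rw [hpull, Pi.mul_apply, hself]

theorem condIndepSetsGiven_of_indep [IsProbabilityMeasure μ] (hm : m ≤ m0) (hmA : mA ≤ m0)
    (hmB : mB ≤ m0) (hAB : Indep mA mB μ) (hindep : Indep (mA ⊔ mB) m μ) :
    CondIndepSetsGiven μ m mA mB := by
  have hmean : ∀ s, MeasurableSet[mA ⊔ mB] s →
      μ[s.indicator fun _ => (1 : ℝ) | m] =ᵐ[μ] fun _ => μ.real s := fun s hs => by
    refine (condExp_indep_eq (sup_le hmA hmB) hm
      (stronglyMeasurable_const.indicator hs) hindep).trans ?_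
    exact .of_eq (funext fun _ => integral_indicator_one (sup_le hmA hmB _ hs))
  intro A B hA hB
  have hA' : MeasurableSet[mA ⊔ mB] A := le_sup_left (b := mB) _ hA
  have hB' : MeasurableSet[mA ⊔ mB] B := le_sup_right (a := mA) _ hB
  filter_upwards [hmean _ (hA'.inter hB'), hmean A hA', hmean B hB'] with ω hcAB hcA hcB
  rw [hcAB, hcA, hcB, measureReal_def, measureReal_def, measureReal_def,
    (Indep_iff _ _ _).1 hAB A B hA hB, ENNReal.toReal_mul]

end ConditionalIndependence

theorem indepFun_map_of_indepFun_comp {Ω Ω' β γ : Type*} [MeasurableSpace Ω]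
    [MeasurableSpace Ω'] [MeasurableSpace β] [MeasurableSpace γ] {μ : Measure Ω'}
    {G : Ω' → Ω} (hG : Measurable G) {X : Ω → β} {Y : Ω → γ} (hX : Measurable X)
    (hY : Measurable Y) (h : (X ∘ G) ⟂ᵢ[μ] (Y ∘ G)) : X ⟂ᵢ[μ.map G] Y := by
  rw [indepFun_iff_measure_inter_preimage_eq_mul] at h ⊢
  intro s t hs ht
  rw [Measure.map_apply hG ((hX hs).inter (hY ht)), Measure.map_apply hG (hX hs),
    Measure.map_apply hG (hY ht)]
  exact h s t hs ht

theorem isMarkovLaw3_of_ae_fst_eq_comp {μ : Measure (ℝ × ℝ × ℝ)} [IsFiniteMeasure μ]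
    {g : ℝ → ℝ} (hg : Measurable g) (h : ∀ᵐ w ∂μ, w.1 = g w.2.1) : IsMarkovLaw3 μ := by
  refine condIndepSetsGiven_of_aestronglyMeasurable
    (measurable_fst.comp measurable_snd).comap_le measurable_fst.comap_le
    (measurable_snd.comp measurable_snd).comap_le ?_
  rintro _ ⟨S, hS, rfl⟩
  refine ⟨fun w => (g ⁻¹' S).indicator (fun _ => (1 : ℝ)) w.2.1, ?_, ?_⟩
  · exact ((measurable_const.indicator (hg hS)).comp (comap_measurable _)).stronglyMeasurable
  · filter_upwards [h] with w hw
    classical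
    simp only [Set.indicator_apply, Set.mem_preimage, hw]

theorem isMarkovLaw3_of_indepFun {μ : Measure (ℝ × ℝ × ℝ)} [IsProbabilityMeasure μ]
    (hXZ : (fun w => w.1) ⟂ᵢ[μ] fun w => w.2.2)
    (hY : (fun w => (w.1, w.2.2)) ⟂ᵢ[μ] fun w => w.2.1) : IsMarkovLaw3 μ := by
  refine condIndepSetsGiven_of_indep (measurable_fst.comp measurable_snd).comap_le
    measurable_fst.comap_le (measurable_snd.comp measurable_snd).comap_le
    ((IndepFun_iff_Indep _ _ _).1 hXZ) ?_
  refine indep_of_indep_of_le_left ((IndepFun_iff_Indep _ _ _).1 hY) (sup_le ?_ ?_)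
  · exact (comap_measurable fun w : ℝ × ℝ × ℝ => (w.1, w.2.2)).fst.comap_le
  · exact (comap_measurable fun w : ℝ × ℝ × ℝ => (w.1, w.2.2)).snd.comap_le

theorem map_apply_eq_one_of_forall_mem {α β : Type*} [MeasurableSpace α] [MeasurableSpace β]
    {μ : Measure α} [IsProbabilityMeasure μ] {f : α → β} (hf : Measurable f) {s : Set β}
    (hs : MeasurableSet s) (h : ∀ x, f x ∈ s) : μ.map f s = 1 := by
  rw [Measure.map_apply hf hs, (Set.eq_univ_of_forall h : f ⁻¹' s = Set.univ),
    measure_univ]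

theorem tendsto_nhds_zero_of_le_one_div_add_one {u : ℕ → ℝ≥0∞}
    (h : ∀ n, u n ≤ ENNReal.ofReal (1 / (n + 1))) : Tendsto u atTop (𝓝 0) := by
  have hlim : Tendsto (fun n : ℕ => ENNReal.ofReal (1 / (n + 1))) atTop (𝓝 0) := by
    simpa using ENNReal.tendsto_ofReal tendsto_one_div_add_atTop_nhds_zero_nat
  exact tendsto_of_tendsto_of_tendsto_of_le_of_le tendsto_const_nhds hlim (fun _ => zero_le) h

noncomputable def fairCoin : Measure Bool := (PMF.uniformOfFintype Bool).toMeasure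

instance : IsProbabilityMeasure fairCoin := PMF.toMeasure.isProbabilityMeasure _

theorem fairCoin_singleton (b : Bool) : fairCoin {b} = 2⁻¹ := by
  simp [fairCoin, PMF.uniformOfFintype_apply]

noncomputable def seqPoint (n : ℕ) (ω : Bool × Bool) : ℝ × ℝ × ℝ :=
  (ω.1.toNat, ω.1.toNat / (n + 1), ω.1.toNat)

def limitPoint (ω : Bool × Bool) : ℝ × ℝ × ℝ := (ω.1.toNat, 0, ω.2.toNat)

noncomputable def chainSeq (n : ℕ) : Measure (ℝ × ℝ × ℝ) :=
  (fairCoin.prod fairCoin).map (seqPoint n)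

noncomputable def chainLimit : Measure (ℝ × ℝ × ℝ) := (fairCoin.prod fairCoin).map limitPoint

instance (n : ℕ) : IsProbabilityMeasure (chainSeq n) :=
  Measure.isProbabilityMeasure_map (measurable_of_countable _).aemeasurable

instance : IsProbabilityMeasure chainLimit :=
  Measure.isProbabilityMeasure_map (measurable_of_countable _).aemeasurable

theorem measurableSet_unitCube :
    MeasurableSet (Set.Icc (0 : ℝ) 1 ×ˢ Set.Icc (0 : ℝ) 1 ×ˢ Set.Icc (0 : ℝ) 1) :=
  measurableSet_Icc.prod (measurableSet_Icc.prod measurableSet_Icc)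

theorem chainSeq_unitCube (n : ℕ) :
    chainSeq n (Set.Icc 0 1 ×ˢ Set.Icc 0 1 ×ˢ Set.Icc 0 1) = 1 := by
  refine map_apply_eq_one_of_forall_mem (measurable_of_countable _) measurableSet_unitCube ?_
  rintro ⟨_ | _, _⟩ <;> simp [seqPoint]
  exact ⟨by positivity, inv_le_one_of_one_le₀ (by simp)⟩

theorem chainLimit_unitCube : chainLimit (Set.Icc 0 1 ×ˢ Set.Icc 0 1 ×ˢ Set.Icc 0 1) = 1 := by
  refine map_apply_eq_one_of_forall_mem (measurable_of_countable _) measurableSet_unitCube ?_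
  rintro ⟨_ | _, _ | _⟩ <;> simp [limitPoint]

theorem isMarkovLaw3_chainSeq (n : ℕ) : IsMarkovLaw3 (chainSeq n) := by
  refine isMarkovLaw3_of_ae_fst_eq_comp (g := fun y => (n + 1) * y)
    (measurable_id.const_mul _) ?_
  refine (ae_map_iff (measurable_of_countable _).aemeasurable
    (measurableSet_eq_fun measurable_fst (by fun_prop))).2 (ae_of_all _ fun ω => ?_)
  simp only [seqPoint]
  field_simp

theorem isMarkovLaw3_chainLimit : IsMarkovLaw3 chainLimit :=
  isMarkovLaw3_of_indepFun
    (indepFun_map_of_indepFun_comp (measurable_of_countable _) measurable_fst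
      (measurable_snd.comp measurable_snd)
      (indepFun_prod (X := fun b : Bool => (b.toNat : ℝ)) (Y := fun b : Bool => (b.toNat : ℝ))
        (measurable_of_countable _) (measurable_of_countable _)))
    (indepFun_map_of_indepFun_comp (measurable_of_countable _) (by fun_prop) (by fun_prop)
      (indepFun_const_right _ (0 : ℝ)))

theorem wassersteinDist_chainSeq_fst_snd_le {p q : ℝ} (hp : 0 < p) (hq : q ≠ 0) (n : ℕ) :
    wassersteinDist (lqDist2 q) p ((chainSeq n).map fun w => (w.1, w.2.1))
      (chainLimit.map fun w => (w.1, w.2.1)) ≤ ENNReal.ofReal (1 / (n + 1)) := by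
  rw [chainSeq, chainLimit, Measure.map_map (by fun_prop) (measurable_of_countable _),
    Measure.map_map (by fun_prop) (measurable_of_countable _)]
  refine wassersteinDist_map_le_ofReal hp (by positivity) _ (measurable_of_countable _)
    (measurable_of_countable _) fun ω => ?_
  simp only [Function.comp_apply, seqPoint, limitPoint, lqDist2_same_fst hq]
  have hn : (0 : ℝ) < n + 1 := by positivity
  rcases ω with ⟨_ | _, _⟩ <;> simp [abs_of_pos hn, hn.le]

theorem wassersteinDist_chainSeq_snd_le {p q : ℝ} (hp : 0 < p) (hq : q ≠ 0) (n : ℕ) :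
    wassersteinDist (lqDist2 q) p ((chainSeq n).map fun w => w.2) (chainLimit.map fun w => w.2)
      ≤ ENNReal.ofReal (1 / (n + 1)) := by
  have hswap : chainLimit.map (fun w => w.2) =
      (fairCoin.prod fairCoin).map fun ω => ((0 : ℝ), (ω.1.toNat : ℝ)) := by
    conv_rhs => rw [← Measure.prod_swap]
    rw [chainLimit, Measure.map_map measurable_snd (measurable_of_countable _),
      Measure.map_map (measurable_of_countable _) measurable_swap]
    rfl
  rw [hswap, chainSeq, Measure.map_map measurable_snd (measurable_of_countable _)]
  refine wassersteinDist_map_le_ofReal hp (by positivity) _ (measurable_of_countable _)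
    (measurable_of_countable _) fun ω => ?_
  simp only [Function.comp_apply, seqPoint, lqDist2_same_snd hq]
  have hn : (0 : ℝ) < n + 1 := by positivity
  rcases ω with ⟨_ | _, _⟩ <;> simp [abs_of_pos hn, hn.le]

theorem chainSeq_apply_corner (n : ℕ) : chainSeq n {w | 1 ≤ w.1 ∧ 1 ≤ w.2.2} = 2⁻¹ := by
  have hpre : seqPoint n ⁻¹' {w | 1 ≤ w.1 ∧ 1 ≤ w.2.2} = {true} ×ˢ Set.univ := by
    ext ⟨_ | _, _⟩ <;> simp [seqPoint]
  rw [chainSeq, Measure.map_apply (measurable_of_countable _) (by measurability), hpre,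
    Measure.prod_prod, fairCoin_singleton, measure_univ, mul_one]

theorem chainLimit_apply_corner : chainLimit {w | 0 < w.1 ∧ 0 < w.2.2} = 4⁻¹ := by
  have hpre : limitPoint ⁻¹' {w | 0 < w.1 ∧ 0 < w.2.2} = {true} ×ˢ {true} := by
    ext ⟨_ | _, _ | _⟩ <;> simp [limitPoint]
  rw [chainLimit, Measure.map_apply (measurable_of_countable _) (by measurability), hpre,
    Measure.prod_prod, fairCoin_singleton, ← ENNReal.mul_inv (by norm_num) (by norm_num)]
  norm_num

theorem rpow_le_wassersteinDist_chainSeq {p q : ℝ} (hp : 0 ≤ p) (hq : 0 < q) (n : ℕ) :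
    (2⁻¹ - 4⁻¹ : ℝ≥0∞) ^ (1 / p) ≤ wassersteinDist (lqDist3 q) p (chainSeq n) chainLimit := by
  rw [← chainSeq_apply_corner n, ← chainLimit_apply_corner]
  refine rpow_measure_sub_le_wassersteinDist hp (by measurability) (by measurability)
    fun x hx y hy => ?_
  rcases not_and_or.1 hy with hy | hy <;> rw [not_lt] at hy
  · calc (1 : ℝ) ≤ x.1 - y.1 := by linarith [hx.1]
      _ ≤ |x.1 - y.1| := le_abs_self _
      _ ≤ lqDist3 q x y := abs_fst_sub_le_lqDist3 hq x y
  · calc (1 : ℝ) ≤ x.2.2 - y.2.2 := by linarith [hx.2]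
      _ ≤ |x.2.2 - y.2.2| := le_abs_self _
      _ ≤ lqDist3 q x y := abs_snd_snd_sub_le_lqDist3 hq x y

/-- **Section S6 counterexample.** For every `p ≥ 1` (and any `l_q` norm, `q ≥ 1`) there are
probability measures `Pₙ`, `P` supported on `[0,1]³ ⊂ ℝ³`, each the law of a Markov chain of
length 3, such that the `(1,2)`- and `(2,3)`-marginals of `Pₙ` converge to those of `P` in the
Wasserstein-`p` metric, yet `Pₙ` does not converge to `P` in the Wasserstein-`p` metric. -/
theorem stmt_10 (p q : ℝ) (hp : 1 ≤ p) (hq : 1 ≤ q) :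
    ∃ (Pn : ℕ → Measure (ℝ × ℝ × ℝ)) (P : Measure (ℝ × ℝ × ℝ)),
      (∀ n, IsProbabilityMeasure (Pn n)) ∧ IsProbabilityMeasure P ∧
      (∀ n, Pn n (Set.Icc 0 1 ×ˢ Set.Icc 0 1 ×ˢ Set.Icc 0 1) = 1) ∧
      P (Set.Icc 0 1 ×ˢ Set.Icc 0 1 ×ˢ Set.Icc 0 1) = 1 ∧
      (∀ n, IsMarkovLaw3 (Pn n)) ∧ IsMarkovLaw3 P ∧
      Tendsto (fun n =>
          wassersteinDist (lqDist2 q) p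
            ((Pn n).map fun w => (w.1, w.2.1)) (P.map fun w => (w.1, w.2.1)))
        atTop (𝓝 0) ∧
      Tendsto (fun n =>
          wassersteinDist (lqDist2 q) p
            ((Pn n).map fun w => w.2) (P.map fun w => w.2))
        atTop (𝓝 0) ∧
      ¬ Tendsto (fun n => wassersteinDist (lqDist3 q) p (Pn n) P) atTop (𝓝 0) := by
  have hp₀ : 0 < p := by linarith
  have hq₀ : 0 < q := by linarith
  have hgap : (2⁻¹ - 4⁻¹ : ℝ≥0∞) ^ (1 / p) ≠ 0 :=
    (ENNReal.rpow_pos (tsub_pos_of_lt (ENNReal.inv_lt_inv.2 (by norm_num))) (by simp)).ne'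
  refine ⟨chainSeq, chainLimit, inferInstance, inferInstance, chainSeq_unitCube,
    chainLimit_unitCube, isMarkovLaw3_chainSeq, isMarkovLaw3_chainLimit,
    tendsto_nhds_zero_of_le_one_div_add_one (wassersteinDist_chainSeq_fst_snd_le hp₀ hq₀.ne'),
    tendsto_nhds_zero_of_le_one_div_add_one (wassersteinDist_chainSeq_snd_le hp₀ hq₀.ne'),
    fun h => hgap ?_⟩
  exact nonpos_iff_eq_zero.1 (ge_of_tendsto' h (rpow_le_wassersteinDist_chainSeq hp₀.le hq₀))
end
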